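/- Let h > 0. Suppose v : ℝ → ℝ and δ : ℝ → (-h,0) are continuously differentiable with bounded derivatives, δ is injective, v(y) = 0 for y ≤ 0 and v'(y) > 0 for y > 0. Define d(φ) = δ(∫_{-h}^0 v(φ(t)) dt) on C¹([-h,0],ℝ). Then for every b > 0 and every closed subspace Z ⊆ C¹([-h,0],ℝ) of finite codimension, d is not constant on U_b ∩ Z, where U_b = {φ ∈ C¹ : |φ'(t)| < b for all t ∈ [-h, d(φ)]}. -/

import Mathlib

open Set

/-- The Banach space `C¹([-h,0],ℝ)`, modelled as the closed subspace of
`C([-h,0],ℝ) × C([-h,0],ℝ)` consisting of pairs `(φ, φ')` where the second component is the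
derivative of the first within `[-h,0]`. -/
noncomputable def D1 (h : ℝ) (hh : 0 < h) :
    Submodule ℝ (C(Icc (-h) 0, ℝ) × C(Icc (-h) 0, ℝ)) where
  carrier := {p | ∀ t : Icc (-h) 0,
      HasDerivWithinAt (fun s : ℝ => p.1 (projIcc (-h) 0 (by linarith) s))
        (p.2 t) (Icc (-h) 0) (t : ℝ)}
  add_mem' := by
    intro p q hp hq t
    first
    | exact (hp t).add (hq t)
    | simpa using (hp t).fun_add (hq t)
  zero_mem' := by
    intro t
    simpa using hasDerivWithinAt_const (t : ℝ) (Icc (-h) 0) (0 : ℝ)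
  smul_mem' := by
    intro c p hp t
    first
    | exact (hp t).const_smul c
    | simpa using (hp t).fun_const_smul c

noncomputable instance D1.instNormedAddCommGroup (h : ℝ) (hh : 0 < h) :
    NormedAddCommGroup (D1 h hh) := by infer_instance

noncomputable instance D1.instNormedSpace (h : ℝ) (hh : 0 < h) :
    NormedSpace ℝ (D1 h hh) := by infer_instance

/-!
The functional `d` sees only the positive part of `φ`, through the strictly increasing
part of `v`. A finite-codimensional subspace `Z` of the infinite-dimensional space `C¹` contains
some `p ≠ 0`; replacing `p` by `-p` makes `p` positive somewhere, and scaling it makes `|p'| < b/2`.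
Then `p` and `2p` both lie in `U_b ∩ Z`, while `v ∘ p ≤ v ∘ 2p` with strict inequality where
`p > 0`, so the integrals differ and injectivity of `δ` separates `d p` from `d (2p)`.
-/

theorem Submodule.ne_bot_of_finiteDimensional_quotient {K V : Type*} [DivisionRing K]
    [AddCommGroup V] [Module K V] (hV : ¬ FiniteDimensional K V) (Z : Submodule K V)
    [FiniteDimensional K (V ⧸ Z)] : Z ≠ ⊥ :=
  fun hZ => hV (LinearEquiv.finiteDimensional (Z.quotEquivOfEqBot hZ))

section ScaleMonotone

variable {v : ℝ → ℝ} (hvc : Continuous v) (hv0 : ∀ y ≤ (0 : ℝ), v y = 0)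
  (hv' : ∀ y > (0 : ℝ), 0 < deriv v y)
include hvc hv'

theorem strictMonoOn_Ici_zero_of_deriv_pos : StrictMonoOn v (Ici 0) :=
  strictMonoOn_of_deriv_pos (convex_Ici 0) hvc.continuousOn fun y hy =>
    hv' y (by rwa [interior_Ici] at hy)

theorem apply_lt_apply_mul {c : ℝ} (hc : 1 < c) {y : ℝ} (hy : 0 < y) : v y < v (c * y) :=
  strictMonoOn_Ici_zero_of_deriv_pos hvc hv' hy.le (mul_pos (by linarith) hy).le
    (lt_mul_of_one_lt_left hy hc)

include hv0

theorem apply_le_apply_mul {c : ℝ} (hc : 1 < c) (y : ℝ) : v y ≤ v (c * y) := by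
  rcases le_or_gt y 0 with hy | hy
  · rw [hv0 y hy, hv0 (c * y) (by nlinarith)]
  · exact (apply_lt_apply_mul hvc hv' hc hy).le

theorem integral_comp_lt_integral_comp_mul {f : ℝ → ℝ} (hf : Continuous f) {a b c : ℝ}
    (hab : a < b) (hc : 1 < c) {t₀ : ℝ} (ht₀ : t₀ ∈ Icc a b) (hft₀ : 0 < f t₀) :
    ∫ t in a..b, v (f t) < ∫ t in a..b, v (c * f t) :=
  intervalIntegral.integral_lt_integral_of_continuousOn_of_le_of_exists_lt hab
    (hvc.comp hf).continuousOn (hvc.comp (continuous_const.mul hf)).continuousOn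
    (fun t _ => apply_le_apply_mul hvc hv0 hv' hc (f t))
    ⟨t₀, ht₀, apply_lt_apply_mul hvc hv' hc hft₀⟩

end ScaleMonotone

namespace D1

noncomputable def ofPolynomial (h : ℝ) (hh : 0 < h) : Polynomial ℝ →ₗ[ℝ] D1 h hh where
  toFun P := ⟨(⟨fun t => P.eval (t : ℝ), by fun_prop⟩,
      ⟨fun t => P.derivative.eval (t : ℝ), by fun_prop⟩), fun t =>
    ((P.hasDerivAt (t : ℝ)).hasDerivWithinAt.congr (fun s hs => by simp [projIcc_of_mem _ hs])
      (by simp [projIcc_of_mem _ t.2]))⟩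
  map_add' P Q := by ext <;> simp
  map_smul' c P := by ext <;> simp

variable {h : ℝ} {hh : 0 < h}

theorem ofPolynomial_injective : Function.Injective (ofPolynomial h hh) := by
  rw [← LinearMap.ker_eq_bot, LinearMap.ker_eq_bot']
  intro P hP
  refine P.eq_zero_of_infinite_isRoot ((Icc_infinite (by linarith : -h < 0)).mono fun x hx => ?_)
  simpa [ofPolynomial] using congrArg (fun φ : D1 h hh => φ.1.1 ⟨x, hx⟩) hP

theorem not_finiteDimensional : ¬ FiniteDimensional ℝ (D1 h hh) := fun _ =>
  Polynomial.not_finite (FiniteDimensional.of_injective _ (ofPolynomial_injective (hh := hh)))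

-- Derivatives within `[-h,0]` are unique.
theorem eq_zero_of_fst_eq_zero {φ : D1 h hh} (hφ : φ.1.1 = 0) : φ = 0 := by
  have hsnd : φ.1.2 = 0 := by
    ext t
    have hzero : HasDerivWithinAt
        (fun s : ℝ => φ.1.1 (projIcc (-h) 0 (by linarith) s)) 0 (Icc (-h) 0) (t : ℝ) := by
      simpa [hφ] using hasDerivWithinAt_const (t : ℝ) (Icc (-h) 0) (0 : ℝ)
    exact (uniqueDiffOn_Icc (by linarith) _ t.2).eq_deriv _ (φ.2 t) hzero
  exact Subtype.ext (Prod.ext hφ hsnd)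

theorem exists_mem_fst_pos {Z : Submodule ℝ (D1 h hh)} (hZ : Z ≠ ⊥) :
    ∃ p ∈ Z, ∃ t, 0 < p.1.1 t := by
  obtain ⟨p, hpZ, hp⟩ := Submodule.exists_mem_ne_zero_of_ne_bot hZ
  obtain ⟨t, ht⟩ : ∃ t, p.1.1 t ≠ 0 := by
    by_contra! hp1
    exact hp (eq_zero_of_fst_eq_zero (ContinuousMap.ext hp1))
  rcases ht.lt_or_gt with hneg | hpos
  · exact ⟨-p, Z.neg_mem hpZ, t, by simpa using hneg⟩
  · exact ⟨p, hpZ, t, hpos⟩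

theorem exists_mem_fst_pos_norm_snd_lt {Z : Submodule ℝ (D1 h hh)} (hZ : Z ≠ ⊥)
    {b : ℝ} (hb : 0 < b) : ∃ p ∈ Z, (∃ t, 0 < p.1.1 t) ∧ ‖p.1.2‖ < b := by
  obtain ⟨p, hpZ, t, ht⟩ := exists_mem_fst_pos hZ
  set c := b / (‖p.1.2‖ + 1)
  have hc : 0 < c := by positivity
  refine ⟨c • p, Z.smul_mem c hpZ, ⟨t, by simpa using mul_pos hc ht⟩, ?_⟩
  calc ‖(c • p).1.2‖ = c * ‖p.1.2‖ := by simp [norm_smul, hc.le]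
    _ < c * (‖p.1.2‖ + 1) := by gcongr; linarith
    _ = b := div_mul_cancel₀ b (by positivity)

end D1

/-- Suppose `v, δ` are continuously differentiable with bounded derivatives, `δ : ℝ → (-h,0)`
is injective, `v(y) = 0` for `y ≤ 0` and `v'(y) > 0` for `y > 0`. Define
`d(φ) = δ(∫_{-h}^0 v(φ(t)) dt)` on `C¹([-h,0],ℝ)`. Then for every `b > 0` and every closed
subspace `Z` of `C¹([-h,0],ℝ)` of finite codimension, `d` is not constant on `U_b ∩ Z`, where
`U_b = {φ ∈ C¹ : |φ'(t)| < b for all t ∈ [-h, d(φ)]}`. -/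
theorem stmt13 (h : ℝ) (hh : 0 < h) (v δ : ℝ → ℝ)
    (hv : ContDiff ℝ 1 v)
    (hδinj : Function.Injective δ)
    (hv0 : ∀ y ≤ (0 : ℝ), v y = 0) (hv' : ∀ y > (0 : ℝ), 0 < deriv v y)
    (d : D1 h hh → ℝ)
    (hd : ∀ φ : D1 h hh, d φ = δ (∫ t in (-h)..0,
      v ((φ : C(Icc (-h) 0, ℝ) × C(Icc (-h) 0, ℝ)).1 (projIcc (-h) 0 (by linarith) t))))
    (b : ℝ) (hb : 0 < b)
    (Z : Submodule ℝ (D1 h hh))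
    [FiniteDimensional ℝ (D1 h hh ⧸ Z)]
    (Ub : Set (D1 h hh))
    (hUb : Ub = {φ : D1 h hh | ∀ t ∈ Icc (-h) (d φ),
      |(φ : C(Icc (-h) 0, ℝ) × C(Icc (-h) 0, ℝ)).2 (projIcc (-h) 0 (by linarith) t)| < b}) :
    ∃ φ ψ, φ ∈ Ub ∩ (Z : Set (D1 h hh)) ∧ ψ ∈ Ub ∩ (Z : Set (D1 h hh)) ∧ d φ ≠ d ψ := by
  obtain ⟨p, hpZ, ⟨t₀, ht₀⟩, hp⟩ := D1.exists_mem_fst_pos_norm_snd_lt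
    (Submodule.ne_bot_of_finiteDimensional_quotient D1.not_finiteDimensional Z) (half_pos hb)
  have mem_Ub : ∀ φ : D1 h hh, ‖φ.1.2‖ < b → φ ∈ Ub := fun φ hφ => by
    rw [hUb]
    exact fun t _ => (φ.1.2.norm_coe_le_norm _).trans_lt hφ
  have h2p : ‖((2 : ℝ) • p).1.2‖ < b := by
    simp only [Submodule.coe_smul, Prod.smul_snd, norm_smul, Real.norm_two]
    linarith
  refine ⟨p, (2 : ℝ) • p, ⟨mem_Ub p (by linarith), hpZ⟩, ⟨mem_Ub _ h2p, Z.smul_mem 2 hpZ⟩, ?_⟩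
  rw [hd, hd]
  refine hδinj.ne (ne_of_lt ?_)
  simpa using integral_comp_lt_integral_comp_mul hv.continuous hv0 hv'
    (p.1.1.continuous.comp continuous_projIcc) (by linarith) one_lt_two
    t₀.2 (by simpa using ht₀)
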